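/- Let p be a prime, let G be a finite group that is a 𝒫₁(p)-group with respect to subgroups H₁ and H₂, and let N be a normal subgroup of G. Then the quotient group G/N is a 𝒫₁(p)-group with respect to the subgroups H₁N/N and H₂N/N (the images of H₁ and H₂ in G/N). -/

import Mathlib

open Pointwise

/-- A group is cyclic or dihedral. -/
def IsCyclicOrDihedral (H : Type*) [Group H] : Prop :=
  IsCyclic H ∨ ∃ n : ℕ, 0 < n ∧ Nonempty (H ≃* DihedralGroup n)

/-- `G` is a `𝒫₀(p)`-group with respect to `(ρ, τ)`. -/
def IsP0 (p : ℕ) {G : Type*} [Group G] (ρ τ : G) : Prop :=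
  orderOf τ = 2 ∧ Subgroup.closure {ρ, τ} = ⊤ ∧
    ∃ n : ℕ, 0 < n ∧
      Nat.card G / orderOf ρ +
          Nat.card G / Nat.card (Subgroup.closure {τ, ρ⁻¹ * τ * ρ} : Subgroup G) +
          p ^ n =
        Nat.card G / 2

/-- `G` is a `𝒫₁(p)`-group with respect to subgroups `H₁` and `H₂`. -/
def IsP1With (p : ℕ) {G : Type*} [Group G] (H₁ H₂ : Subgroup G) : Prop :=
  IsCyclicOrDihedral H₁ ∧ IsCyclicOrDihedral H₂ ∧
    ∃ n : ℕ, Nat.card G = p ^ n * Nat.lcm (Nat.card H₁) (Nat.card H₂)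

/-- `G` is a `𝒫₁(p)`-group. -/
def IsP1 (p : ℕ) (G : Type*) [Group G] : Prop :=
  ∃ H₁ H₂ : Subgroup G, IsP1With p H₁ H₂

/-- `G` is a `𝒫₁⁺(p)`-group with respect to `(ρ, τ)`. -/
def IsP1Plus (p : ℕ) {G : Type*} [Group G] (ρ τ : G) : Prop :=
  orderOf τ ≤ 2 ∧ Subgroup.closure {ρ, τ} = ⊤ ∧
    (Odd p → Subgroup.closure {ρ⁻¹ * τ⁻¹ * ρ * τ, ρ} = ⊤) ∧
    IsP1With p (Subgroup.closure {τ, ρ⁻¹ * τ * ρ}) (Subgroup.zpowers ρ)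

/-- `G` is a `𝒫₂(p)`-group. -/
def IsP2 (p : ℕ) (G : Type*) [Group G] : Prop :=
  ∀ r : ℕ, r.Prime → r ≠ p → ∀ S : Sylow r G, IsCyclicOrDihedral (S : Subgroup G)

/-- `G` is a `𝒫₂⁺(p)`-group with respect to `(ρ, τ)`. -/
def IsP2Plus (p : ℕ) {G : Type*} [Group G] (ρ τ : G) : Prop :=
  orderOf τ ≤ 2 ∧ Subgroup.closure {ρ, τ} = ⊤ ∧
    (Odd p → Subgroup.closure {ρ⁻¹ * τ⁻¹ * ρ * τ, ρ} = ⊤) ∧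
    IsP2 p G

/-- A Hall `{2,3}`-subgroup. -/
def IsHall23 {G : Type*} [Group G] (H : Subgroup G) : Prop :=
  (∃ i j : ℕ, Nat.card H = 2 ^ i * 3 ^ j) ∧ Nat.Coprime H.index 6

/-- A Hall `{2,3}'`-subgroup. -/
def IsHall23' {G : Type*} [Group G] (K : Subgroup G) : Prop :=
  Nat.Coprime (Nat.card K) 6 ∧ ∃ i j : ℕ, K.index = 2 ^ i * 3 ^ j

/-- The projective special linear group of degree 2 over `R`. -/
abbrev ProjSL2 (R : Type*) [CommRing R] : Type _ :=
  Matrix.SpecialLinearGroup (Fin 2) R ⧸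
    Subgroup.center (Matrix.SpecialLinearGroup (Fin 2) R)

/-- The projective general linear group of degree 2 over `R`. -/
abbrev ProjGL2 (R : Type*) [CommRing R] : Type _ :=
  Matrix.GeneralLinearGroup (Fin 2) R ⧸
    Subgroup.center (Matrix.GeneralLinearGroup (Fin 2) R)

/-! Homomorphic images of cyclic or dihedral groups are cyclic or dihedral: an image of `D_n` is
generated by `a, b` with `b² = 1` and `b a b = a⁻¹`, so it is either `⟨a⟩` or isomorphic to
`D_{ord a}`. For the orders, `|Hᵢ|` divides `|HᵢN/N| · |N|`, hence
`|G/N| · |N| = pⁿ lcm |Hᵢ|` divides `pⁿ lcm |HᵢN/N| · |N|`; as `lcm |HᵢN/N|` divides `|G/N|`,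
their quotient is a power of `p`. -/
open Subgroup

lemma pow_mod_of_pow_eq_one {M : Type*} [Monoid M] {a : M} {n : ℕ} (ha : a ^ n = 1) (k : ℕ) :
    a ^ (k % n) = a ^ k := by
  conv_rhs => rw [← Nat.mod_add_div k n, pow_add, pow_mul, ha, one_pow, mul_one]

section DihedralRelations

variable {K : Type*} [Group K] {a b : K}

lemma pow_zmod_val_add {n : ℕ} [NeZero n] (ha : a ^ n = 1) (i j : ZMod n) :
    a ^ (i + j).val = a ^ i.val * a ^ j.val := by
  rw [ZMod.val_add, pow_mod_of_pow_eq_one ha, pow_add]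

lemma pow_zmod_val_sub {n : ℕ} [NeZero n] (ha : a ^ n = 1) (i j : ZMod n) :
    a ^ (j - i).val = (a ^ i.val)⁻¹ * a ^ j.val := by
  rw [eq_inv_mul_iff_mul_eq, ← pow_zmod_val_add ha, add_sub_cancel]

lemma mul_pow_mul_eq_inv (hb : b * b = 1) (hab : b * a * b = a⁻¹) (k : ℕ) :
    b * a ^ k * b = (a ^ k)⁻¹ := by
  have hb' : b⁻¹ = b := inv_eq_of_mul_eq_one_left hb
  calc b * a ^ k * b = (b * a * b⁻¹) ^ k := by rw [conj_pow, hb']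
    _ = (a ^ k)⁻¹ := by rw [hb', hab, inv_pow]

end DihedralRelations

namespace DihedralGroup

variable {n : ℕ} {K : Type*} [Group K]

theorem closure_r_one_sr_zero : closure {r (1 : ZMod n), sr 0} = ⊤ := by
  have hr : ∀ i : ZMod n, r i ∈ closure {r (1 : ZMod n), sr 0} := fun i => by
    rw [← ZMod.intCast_zmod_cast i, ← r_one_zpow]
    exact zpow_mem (subset_closure (by simp)) _
  refine eq_top_iff.2 fun x _ => ?_
  rcases x with i | i
  · exact hr i
  · rw [← zero_add i, ← sr_mul_r]
    exact mul_mem (subset_closure (by simp)) (hr i)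

variable [NeZero n]

def lift (a b : K) (ha : a ^ n = 1) (hb : b * b = 1) (hab : b * a * b = a⁻¹) :
    DihedralGroup n →* K :=
  MonoidHom.mk' (fun | r i => a ^ i.val | sr i => b * a ^ i.val) <| by
    have hswap : ∀ i : ZMod n, a ^ i.val * b = b * (a ^ i.val)⁻¹ := fun i => by
      rw [← mul_pow_mul_eq_inv hb hab, ← mul_assoc, ← mul_assoc, hb, one_mul]
    rintro (i | i) (j | j)
    · exact pow_zmod_val_add ha i j
    · show b * a ^ (j - i).val = a ^ i.val * (b * a ^ j.val)
      rw [pow_zmod_val_sub ha, ← mul_assoc (a ^ i.val), hswap, mul_assoc]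
    · show b * a ^ (i + j).val = b * a ^ i.val * a ^ j.val
      rw [pow_zmod_val_add ha, mul_assoc]
    · show a ^ (j - i).val = b * a ^ i.val * (b * a ^ j.val)
      rw [pow_zmod_val_sub ha, ← mul_pow_mul_eq_inv hb hab]
      group

variable {a b : K} {ha : a ^ n = 1} {hb : b * b = 1} {hab : b * a * b = a⁻¹}

@[simp]
theorem lift_r (i : ZMod n) : lift a b ha hb hab (r i) = a ^ i.val := rfl

@[simp]
theorem lift_sr (i : ZMod n) : lift a b ha hb hab (sr i) = b * a ^ i.val := rfl

end DihedralGroup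

open DihedralGroup in
theorem isCyclicOrDihedral_of_closure_eq_top {K : Type*} [Group K] [Finite K] {a b : K}
    (hb : b * b = 1) (hab : b * a * b = a⁻¹) (hgen : closure {a, b} = ⊤) :
    IsCyclicOrDihedral K := by
  by_cases hba : b ∈ zpowers a
  · refine Or.inl (isCyclic_iff_exists_zpowers_eq_top.2 ⟨a, top_le_iff.1 ?_⟩)
    rw [← hgen, closure_le]
    exact Set.insert_subset (mem_zpowers a) (Set.singleton_subset_iff.2 hba)
  · have : NeZero (orderOf a) := ⟨(orderOf_pos a).ne'⟩
    let φ : DihedralGroup (orderOf a) →* K := lift a b (pow_orderOf_eq_one a) hb hab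
    have hsurj : Function.Surjective φ := by
      rw [← MonoidHom.range_eq_top, eq_top_iff, ← hgen, closure_le]
      refine Set.insert_subset ⟨r 1, ?_⟩ (Set.singleton_subset_iff.2 ⟨sr 0, ?_⟩)
      · rw [lift_r, ZMod.val_one_eq_one_mod, pow_mod_orderOf, pow_one]
      · rw [lift_sr, ZMod.val_zero, pow_zero, mul_one]
    have hinj : Function.Injective φ := by
      refine (injective_iff_map_eq_one φ).2 ?_
      rintro (i | i) h
      · rw [lift_r, ← orderOf_dvd_iff_pow_eq_one] at h
        rw [one_def, (ZMod.val_eq_zero i).1 (Nat.eq_zero_of_dvd_of_lt h (ZMod.val_lt i))]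
      · rw [lift_sr] at h
        exact absurd (eq_inv_of_mul_eq_one_left h ▸ inv_mem (pow_mem (mem_zpowers a) _)) hba
    exact Or.inr ⟨orderOf a, orderOf_pos a, ⟨(MulEquiv.ofBijective φ ⟨hinj, hsurj⟩).symm⟩⟩

open DihedralGroup in
theorem IsCyclicOrDihedral.of_surjective {H K : Type*} [Group H] [Group K] (f : H →* K)
    (hf : Function.Surjective f) (h : IsCyclicOrDihedral H) : IsCyclicOrDihedral K := by
  rcases h with h | ⟨n, hn, ⟨e⟩⟩
  · exact Or.inl (isCyclic_of_surjective f hf)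
  have : NeZero n := ⟨hn.ne'⟩
  let ψ : DihedralGroup n →* K := f.comp e.symm.toMonoidHom
  have hψ : Function.Surjective ψ := hf.comp e.symm.surjective
  have : Finite K := Finite.of_surjective ψ hψ
  refine isCyclicOrDihedral_of_closure_eq_top (a := ψ (r 1)) (b := ψ (sr 0)) ?_ ?_ ?_
  · rw [← map_mul, sr_mul_self, map_one]
  · rw [← map_mul, ← map_mul, ← map_inv, sr_mul_r, sr_mul_sr, inv_r]
    simp
  · rw [← Set.image_pair, ← MonoidHom.map_closure, closure_r_one_sr_zero,
      map_top_of_surjective ψ hψ]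

theorem Subgroup.card_dvd_card_map_mul_card_ker {G G' : Type*} [Group G] [Group G']
    (f : G →* G') (K : Subgroup G) : Nat.card K ∣ Nat.card (K.map f) * Nat.card f.ker := by
  have hK : Nat.card K = Nat.card (f.ker ⊓ K : Subgroup G) * Nat.card (K.map f) := by
    rw [← relIndex_bot_left, ← relIndex_bot_left (f.ker ⊓ K), ← relIndex_ker,
      ← inf_relIndex_right f.ker K, relIndex_mul_relIndex _ _ _ bot_le inf_le_right]
  rw [hK, mul_comm]
  exact mul_dvd_mul_left _ (card_dvd_of_le inf_le_left)

theorem Subgroup.lcm_card_dvd_lcm_card_map_mul_card_ker {G G' : Type*} [Group G] [Group G']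
    (f : G →* G') (H₁ H₂ : Subgroup G) :
    Nat.lcm (Nat.card H₁) (Nat.card H₂) ∣
      Nat.lcm (Nat.card (H₁.map f)) (Nat.card (H₂.map f)) * Nat.card f.ker := by
  rw [← Nat.lcm_mul_right]
  exact Nat.lcm_dvd ((card_dvd_card_map_mul_card_ker f H₁).trans (Nat.dvd_lcm_left _ _))
    ((card_dvd_card_map_mul_card_ker f H₂).trans (Nat.dvd_lcm_right _ _))

theorem Nat.exists_eq_prime_pow_mul_of_dvd_of_dvd_prime_pow_mul {p n c L : ℕ} (hp : p.Prime)
    (hLc : L ∣ c) (hc : c ∣ p ^ n * L) : ∃ m, c = p ^ m * L := by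
  obtain ⟨t, rfl⟩ := hLc
  rcases L.eq_zero_or_pos with rfl | hL
  · exact ⟨0, by simp⟩
  rw [mul_comm (p ^ n), Nat.mul_dvd_mul_iff_left hL, Nat.dvd_prime_pow hp] at hc
  obtain ⟨m, -, rfl⟩ := hc
  exact ⟨m, mul_comm _ _⟩

/-- If the finite group `G` is a `𝒫₁(p)`-group with respect to `H₁` and `H₂`, and `N` is a
normal subgroup of `G`, then `G/N` is a `𝒫₁(p)`-group with respect to `H₁N/N` and `H₂N/N`. -/
theorem stmt4 {G : Type*} [Group G] [Finite G] {p : ℕ} (hp : p.Prime)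
    (H₁ H₂ : Subgroup G) (N : Subgroup G) [N.Normal] (h : IsP1With p H₁ H₂) :
    IsP1With p (H₁.map (QuotientGroup.mk' N)) (H₂.map (QuotientGroup.mk' N)) := by
  obtain ⟨hH₁, hH₂, n, hG⟩ := h
  let π := QuotientGroup.mk' N
  have hGN : Nat.card (G ⧸ N) ∣ p ^ n * Nat.lcm (Nat.card (H₁.map π)) (Nat.card (H₂.map π)) := by
    refine Nat.dvd_of_mul_dvd_mul_right (Nat.card_pos (α := N)) ?_
    rw [← card_eq_card_quotient_mul_card_subgroup, hG, mul_assoc]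
    refine mul_dvd_mul_left _ ?_
    simpa only [π, QuotientGroup.ker_mk'] using lcm_card_dvd_lcm_card_map_mul_card_ker π H₁ H₂
  exact ⟨hH₁.of_surjective _ (π.subgroupMap_surjective H₁),
    hH₂.of_surjective _ (π.subgroupMap_surjective H₂),
    Nat.exists_eq_prime_pow_mul_of_dvd_of_dvd_prime_pow_mul hp
      (Nat.lcm_dvd (card_subgroup_dvd_card _) (card_subgroup_dvd_card _)) hGN⟩
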